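/- arXiv:1612.02549 — 6 statements merged into one kernel-verified Lean document; each statement's English description precedes it below -/
import Mathlib

section
/- Kleene's incompleteness theorem: Let P : ℕ → Prop be a predicate such that {n : P n} is recursively enumerable and such that P n implies that φ_n(n) is undefined (soundness). Then there exists t with φ_t(t) undefined but ¬P t. -/
/-- The standard enumeration of unary partial computable functions. -/
def phi (n : ℕ) : ℕ →. ℕ :=
  Nat.Partrec.Code.eval (Denumerable.ofNat Nat.Partrec.Code n)

/-- `W n` is the domain of the `n`-th partial computable function. -/
def W (n : ℕ) : Set ℕ := {m | (phi n m).Dom}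

/-- The diagonal (non-)halting set `K = {n : φ_n(n) is undefined}`. -/
def K : Set ℕ := {n | n ∉ W n}

/-- A set is recursively enumerable iff it is `W n` for some `n`. -/
def RE (A : Set ℕ) : Prop := ∃ n, A = W n

/-- Kolmogorov–Chaitin complexity: least index `i` with `φ_i(0)↓ = m`. -/
noncomputable def KC (m : ℕ) : ℕ := sInf {i | m ∈ phi i 0}

theorem kleene_incompleteness (P : ℕ → Prop) (hre : RE {n | P n})
    (hsound : ∀ n, P n → ¬ (phi n n).Dom) :
    ∃ t, ¬ (phi t t).Dom ∧ ¬ P t := by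
  obtain ⟨e, he⟩ := hre
  have hdom : ¬ (phi e e).Dom := by
    intro h
    have hPe : P e := by
      have : e ∈ W e := h
      rw [← he] at this; exact this
    exact hsound e hPe h
  refine ⟨e, hdom, fun hPe => hdom ?_⟩
  have : e ∈ W e := by rw [← he]; exact hPe
  exact this
end

section
/- There is no total computable function f : ℕ → ℕ such that 𝒦(f(m)) > m for all m ∈ ℕ. -/
theorem no_computable_complexity_lower_bound :
    ¬ ∃ f : ℕ → ℕ, Computable f ∧ ∀ m, KC (f m) > m := by
  rintro ⟨f, hf, hgt⟩
  obtain ⟨c, hc⟩ := Nat.Partrec.Code.fixed_point₂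
    (f := fun c (_ : ℕ) => (f (Encodable.encode c) : Part ℕ))
    ((hf.comp (Computable.encode.comp Computable.fst)).partrec.to₂)
  have hmem : f (Encodable.encode c) ∈ phi (Encodable.encode c) 0 := by
    simp [phi, Denumerable.ofNat_encode, hc]
  have hle : KC (f (Encodable.encode c)) ≤ Encodable.encode c :=
    Nat.sInf_le hmem
  exact absurd hle (not_le.mpr (hgt (Encodable.encode c)))
end

section
/- The Kolmogorov–Chaitin complexity function 𝒦 is not computable. -/
/-!
A program has at most one output on input `0`, so `KC` is injective and hence unbounded.
If it were computable, so would be `f x = min {y | x < KC y}`. By Kleene's recursion theorem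
some program `c` outputs `f c` on input `0`, whence `KC (f c) ≤ c < KC (f c)`.
-/

open Nat.Partrec Encodable

@[simp]
lemma phi_encode (c : Code) : phi (encode c) = c.eval := by
  simp [phi]

lemma KC_le {m i : ℕ} (h : m ∈ phi i 0) : KC m ≤ i :=
  Nat.sInf_le h

lemma mem_phi_KC (m : ℕ) : m ∈ phi (KC m) 0 :=
  Nat.sInf_mem (s := {i | m ∈ phi i 0}) ⟨encode (Code.const m), by simp [Code.eval_const]⟩

lemma KC_injective : Function.Injective KC := fun a b hab =>
  Part.mem_unique (mem_phi_KC a) (hab ▸ mem_phi_KC b)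

lemma exists_lt_KC (x : ℕ) : ∃ y, x < KC y := by
  obtain ⟨_, ⟨y, rfl⟩, hy⟩ :=
    not_bddAbove_iff.1 (Set.infinite_range_of_injective KC_injective).not_bddAbove x
  exact ⟨y, hy⟩

lemma exists_KC_le_of_computable {f : ℕ → ℕ} (hf : Computable f) : ∃ x, KC (f x) ≤ x := by
  obtain ⟨c, hc⟩ := Code.fixed_point₂
    (f := fun c _ => Part.some (f (encode c)))
    (Computable.to₂ (hf.comp (Computable.encode.comp Computable.fst))).partrec₂
  refine ⟨encode c, KC_le ?_⟩
  simp [hc]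

theorem KC_not_computable : ¬ Computable KC := by
  intro hKC
  have hfind : Computable fun x => Nat.find (exists_lt_KC x) :=
    Computable.find (P := fun x y => x < KC y) ⟨inferInstance,
      Primrec.nat_lt.decide.to_comp.comp Computable.fst (hKC.comp Computable.snd)⟩ exists_lt_KC
  obtain ⟨x, hx⟩ := exists_KC_le_of_computable hfind
  exact hx.not_gt (Nat.find_spec (exists_lt_KC x))
end

section
/- Under the hypotheses of Chaitin's theorem (Pr r.e. and Pr(w,e) → 𝒦(w) > e), a Chaitin constant c can be computed from an r.e. index of Pr: there is a total computable function taking an index of the r.e. set {(w,e) : Pr(w,e)} to a number c such that for all e ≥ c and all w, ¬Pr(w,e). -/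
/-!
Kleene's recursion theorem, applied uniformly in `i`, gives a program `c = g i` which on any input
searches the r.e. set `W i` for a pair `(w, e)` with `e ≥ c` and prints `w`. If such a pair existed
the search would succeed, so `𝒦(w) ≤ c ≤ e`, contradicting `Pr(w, e) → 𝒦(w) > e`.
-/

open Encodable Denumerable Nat.Partrec

namespace Nat.Partrec.Code

theorem exists_computable_fixed_point₂ {α : Type*} [Primcodable α] {f : α → Code → ℕ →. ℕ}
    (hf : Partrec fun p : α × Code × ℕ => f p.1 p.2.1 p.2.2) :
    ∃ g : α → Code, Computable g ∧ ∀ a, eval (g a) = f a (g a) := by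
  -- a single fixed point `c` of the recursion theorem serves every `a`, as `curry c (encode a)`
  let F (c : Code) (n : ℕ) : Part ℕ :=
    (decode (α := α) n.unpair.1 : Part α).bind fun a => f a (curry c (encode a)) n.unpair.2
  have hF : Partrec₂ F :=
    (Computable.ofOption (Computable.decode.comp (Computable.fst.comp
      (Computable.unpair.comp Computable.snd)))).bind
      (hf.comp (Computable.snd.pair ((Primrec₂.to_comp primrec₂_curry).comp
        (Computable.fst.comp Computable.fst) (Computable.encode.comp Computable.snd) |>.pair
        (Computable.snd.comp (Computable.unpair.comp (Computable.snd.comp Computable.fst)))))).to₂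
  obtain ⟨c, hc⟩ := fixed_point₂ hF
  refine ⟨fun a => curry c (encode a), (primrec₂_curry.comp (.const c) .encode).to_comp,
    fun a => funext fun y => ?_⟩
  simp [eval_curry, hc, F]

end Nat.Partrec.Code

open Nat.Partrec.Code

-- `n` codes a pair `(m, k)`: `m` is accepted when `φ_i(m)` halts within `k` steps and `p m` holds.
def findInW (p : ℕ → Bool) (i : ℕ) : Part ℕ :=
  Nat.rfindOpt fun n =>
    bif (evaln n.unpair.2 (ofNat Code i) n.unpair.1).isSome && p n.unpair.1
    then some n.unpair.1 else none

theorem mem_W_of_mem_findInW {p : ℕ → Bool} {i m : ℕ} (h : m ∈ findInW p i) :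
    m ∈ W i ∧ p m = true := by
  rw [findInW] at h
  obtain ⟨n, hn⟩ := Nat.rfindOpt_spec h
  cases hb : (evaln n.unpair.2 (ofNat Code i) n.unpair.1).isSome && p n.unpair.1 <;>
    simp only [hb, cond_false, cond_true, Option.mem_def, reduceCtorEq, Option.some.injEq] at hn
  subst hn
  obtain ⟨⟨x, hx⟩, hpm⟩ : (∃ x, _) ∧ _ := by simpa [Option.isSome_iff_exists] using hb
  exact ⟨Part.dom_iff_mem.2 ⟨x, evaln_sound hx⟩, hpm⟩

theorem findInW_dom {p : ℕ → Bool} {i m : ℕ} (hm : m ∈ W i) (hp : p m = true) :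
    (findInW p i).Dom := by
  obtain ⟨x, hx⟩ := Part.dom_iff_mem.1 hm
  obtain ⟨k, hk⟩ := evaln_complete.1 hx
  refine Nat.rfindOpt_dom.2 ⟨Nat.pair m k, m, ?_⟩
  simp [Option.isSome_iff_exists.2 ⟨x, hk⟩, hp]

theorem Partrec.findInW {α : Type*} [Primcodable α] {p : α → ℕ → Bool} {i : α → ℕ}
    (hp : Computable₂ p) (hi : Computable i) : Partrec fun a => findInW (p a) (i a) := by
  have hm : Computable fun q : α × ℕ => q.2.unpair.1 :=
    Computable.fst.comp (Computable.unpair.comp Computable.snd)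
  have hk : Computable fun q : α × ℕ => q.2.unpair.2 :=
    Computable.snd.comp (Computable.unpair.comp Computable.snd)
  have hhalt : Computable fun q : α × ℕ =>
      (evaln q.2.unpair.2 (ofNat Code (i q.1)) q.2.unpair.1).isSome :=
    Primrec.option_isSome.to_comp.comp (primrec_evaln.to_comp.comp
      ((hk.pair ((Computable.ofNat Code).comp (hi.comp Computable.fst))).pair hm))
  exact Partrec.rfindOpt (Computable.cond
    ((Primrec.and.to_comp).comp hhalt (hp.comp Computable.fst hm))
    (Computable.option_some.comp hm) (Computable.const (Option.none : Option ℕ))).to₂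

def chaitinSearch (i : ℕ) (c : Code) : Part ℕ :=
  (findInW (fun m => decide (encode c ≤ m.unpair.2)) i).map fun m => m.unpair.1

theorem Partrec.chaitinSearch : Partrec fun p : ℕ × Code × ℕ => chaitinSearch p.1 p.2.1 := by
  have hp : Computable₂ fun (p : ℕ × Code × ℕ) (m : ℕ) => decide (encode p.2.1 ≤ m.unpair.2) :=
    (Primrec.nat_le.comp (Primrec.encode.comp (Primrec.fst.comp (Primrec.snd.comp Primrec.fst)))
      (Primrec.snd.comp (Primrec.unpair.comp Primrec.snd))).decide.to_comp
  exact (Partrec.findInW hp Computable.fst).map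
    (Computable.fst.comp (Computable.unpair.comp Computable.snd)).to₂

theorem KC_le_encode {w : ℕ} {c : Code} (h : w ∈ eval c 0) : KC w ≤ encode c :=
  Nat.sInf_le (by simpa [phi] using h)

theorem pair_notMem_W_of_eval_eq_chaitinSearch {i : ℕ} {c : Code}
    (hc : eval c 0 = chaitinSearch i c) (hKC : ∀ w e, Nat.pair w e ∈ W i → e < KC w)
    {e : ℕ} (he : encode c ≤ e) (w : ℕ) : Nat.pair w e ∉ W i := by
  intro hwe
  obtain ⟨m, hm⟩ := Part.dom_iff_mem.1
    (findInW_dom (p := fun m => decide (encode c ≤ m.unpair.2)) hwe (by simpa using he))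
  obtain ⟨hmW, hmc⟩ := mem_W_of_mem_findInW hm
  have hout : m.unpair.1 ∈ eval c 0 := hc ▸ Part.mem_map _ hm
  have hlt : m.unpair.2 < KC m.unpair.1 := hKC _ _ (by rwa [Nat.pair_unpair])
  have hle : KC m.unpair.1 ≤ encode c := KC_le_encode hout
  simp only [decide_eq_true_eq] at hmc
  omega

theorem chaitin_constant_computable :
    ∃ g : ℕ → ℕ, Computable g ∧
      ∀ (Pr : ℕ → ℕ → Prop) (i : ℕ),
        (∀ w e, Pr w e ↔ Nat.pair w e ∈ W i) →
        (∀ w e, Pr w e → KC w > e) →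
        ∀ e ≥ g i, ∀ w, ¬ Pr w e := by
  obtain ⟨g, hg, hfix⟩ :=
    exists_computable_fixed_point₂ (f := fun i c _ => chaitinSearch i c) Partrec.chaitinSearch
  refine ⟨fun i => encode (g i), Computable.encode.comp hg, fun Pr i hPr hKC e he w hw => ?_⟩
  exact pair_notMem_W_of_eval_eq_chaitinSearch (congrFun (hfix i) 0)
    (fun w e h => hKC w e ((hPr w e).2 h)) he w ((hPr w e).1 hw)
end

section
/- Non-constructivity of Chaitin's proof: there is no total computable function g such that for every e, 𝒦(g(e)) > e. Consequently, no algorithm can, given a Chaitin constant c_T for a theory T, produce a witness w with 𝒦(w) > c_T. -/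
theorem chaitin_nonconstructive :
    ¬ ∃ g : ℕ → ℕ, Computable g ∧ ∀ e, KC (g e) > e := by
  rintro ⟨g, hg, hgt⟩
  have hf : Partrec₂ (fun (c : Nat.Partrec.Code) (_ : ℕ) =>
      (Part.some (g (Encodable.encode c)) : Part ℕ)) := by
    exact (hg.comp (Computable.encode.comp Computable.fst)).to₂.partrec₂
  obtain ⟨c, hc⟩ := Nat.Partrec.Code.fixed_point₂ hf
  set e := Encodable.encode c with he
  have hmem : g e ∈ phi e 0 := by
    have : (Denumerable.ofNat Nat.Partrec.Code e) = c := by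
      simp [he]
    simp [phi, this, hc]
  have : KC (g e) ≤ e := Nat.sInf_le hmem
  exact absurd (hgt e) (not_lt.mpr this)
end

section
/- Non-constructivity of Boolos' proof (diagonal form): suppose ħ : ℕ → ℕ is computable with lim ħ = ∞, (ℓ_j) is a computable sequence with lim_j ħ(ℓ_j) = ∞, and b : ℕ → ℕ is a function with 𝒦(b j) ≥ ħ(ℓ_j) for all j. Then b is not computable. -/
/-!
If `b` were computable, then so would be `x ↦ b (ι x)`, where `ι x` is the first `j` with
`x < ħ (ℓ j)`. Its values have complexity exceeding its input, which Kleene's recursion theorem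
rules out: some program `c` outputs the value at its own index `c`, so that value has
complexity at most `c`.
-/

open Encodable Nat.Partrec

theorem KC_le_of_mem_phi {m i : ℕ} (hm : m ∈ phi i 0) : KC m ≤ i :=
  Nat.sInf_le hm

theorem Computable.exists_KC_le {f : ℕ → ℕ} (hf : Computable f) : ∃ n, KC (f n) ≤ n := by
  have hself : Partrec₂ fun (c : Code) (_ : ℕ) => (Part.some (f (encode c)) : Part ℕ) :=
    (hf.comp (Computable.encode.comp Computable.fst)).partrec
  obtain ⟨c, hc⟩ := Code.fixed_point₂ hself
  refine ⟨encode c, KC_le_of_mem_phi ?_⟩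
  simp [phi, hc]

theorem Computable.exists_computable_lt {u : ℕ → ℕ} (hu : Computable u)
    (hunb : ∀ x, ∃ j, x < u j) : ∃ ι : ℕ → ℕ, Computable ι ∧ ∀ x, x < u (ι x) := by
  refine ⟨fun x => Nat.find (hunb x), ?_, fun x => Nat.find_spec (hunb x)⟩
  have hpred : Computable₂ fun x j => decide (x < u j) :=
    Primrec.nat_lt.decide.to_comp.comp Computable.fst (hu.comp Computable.snd)
  have hsearch : Partrec fun x => Nat.rfind fun j => Part.some (decide (x < u j)) :=
    Partrec.rfind hpred.partrec₂
  refine hsearch.of_eq_tot fun x => Nat.mem_rfind.2 ⟨?_, fun hm => ?_⟩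
  · simpa using Nat.find_spec (hunb x)
  · simpa using Nat.find_min (hunb x) hm

theorem boolos_nonconstructive_general (h : ℕ → ℕ) (hcomp : Computable h)
    (l : ℕ → ℕ) (hl : Computable l)
    (hlt : Filter.Tendsto (fun j => h (l j)) Filter.atTop Filter.atTop)
    (b : ℕ → ℕ) (hb : ∀ j, h (l j) ≤ KC (b j)) :
    ¬ Computable b := by
  intro hbc
  obtain ⟨ι, hι, hιlt⟩ := (hcomp.comp hl).exists_computable_lt
    fun x => (hlt.eventually_gt_atTop x).exists
  obtain ⟨n, hn⟩ := (hbc.comp hι).exists_KC_le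
  exact (hιlt n).not_ge (hb (ι n) |>.trans hn)

theorem boolos_nonconstructive (h : ℕ → ℕ) (hcomp : Computable h)
    (htend : Filter.Tendsto h Filter.atTop Filter.atTop)
    (l : ℕ → ℕ) (hl : Computable l)
    (hlt : Filter.Tendsto (fun j => h (l j)) Filter.atTop Filter.atTop)
    (b : ℕ → ℕ) (hb : ∀ j, h (l j) ≤ KC (b j)) :
    ¬ Computable b :=
  boolos_nonconstructive_general h hcomp l hl hlt b hb
end
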